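/- arXiv:2108.00735 — 3 statements merged into one kernel-verified Lean document; each statement's English description precedes it below -/
import Mathlib

section
/- (Induced metric on the Segre manifold.) Let d ≥ 1, n_1,…,n_d ≥ 1, λ, λ̇, μ̇ ∈ ℝ, and let a_k, ẋ_k, ẏ_k ∈ ℝ^{n_k} satisfy ‖a_k‖ = 1, ⟨ẋ_k, a_k⟩ = 0, and ⟨ẏ_k, a_k⟩ = 0 for each k. Define the tensors U = λ̇·(a_1⊗⋯⊗a_d) + λ·Σ_{k=1}^d a_1⊗⋯⊗a_{k-1}⊗ẋ_k⊗a_{k+1}⊗⋯⊗a_d and V = μ̇·(a_1⊗⋯⊗a_d) + λ·Σ_{k=1}^d a_1⊗⋯⊗a_{k-1}⊗ẏ_k⊗a_{k+1}⊗⋯⊗a_d. Then ⟨U, V⟩_F = λ̇μ̇ + λ²·Σ_{k=1}^d ⟨ẋ_k, ẏ_k⟩. -/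
open Finset

section Aux

variable {d : ℕ} {n : Fin d → ℕ}

lemma segre_key (f : ∀ k : Fin d, Fin (n k) → ℝ) :
    ∑ i : (∀ k, Fin (n k)), ∏ k, f k (i k) = ∏ k, ∑ j, f k j :=
  (Fintype.prod_sum f).symm

lemma segre_P2 (a : ∀ k : Fin d, Fin (n k) → ℝ) (ha : ∀ k, ∑ j, (a k j) ^ 2 = 1) :
    ∑ i : (∀ k, Fin (n k)), (∏ k, a k (i k)) * (∏ k, a k (i k)) = 1 := by
  simp only [← Finset.prod_mul_distrib]
  rw [segre_key (fun k m => a k m * a k m)]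
  have : ∀ k, ∑ j, a k j * a k j = 1 := fun k => by simpa [sq] using ha k
  simp [this]

lemma segre_cross (a w : ∀ k : Fin d, Fin (n k) → ℝ)
    (ha : ∀ k, ∑ j, (a k j) ^ 2 = 1) (hw : ∀ k, ∑ j, w k j * a k j = 0) (j : Fin d) :
    ∑ i : (∀ k, Fin (n k)),
      (∏ k, a k (i k)) * (w j (i j) * ∏ k ∈ univ.erase j, a k (i k)) = 0 := by
  set F : ∀ k : Fin d, Fin (n k) → ℝ :=
    Function.update (fun k m => a k m * a k m) j (fun m => w j m * a j m) with hF
  have hpt : ∀ i : (∀ k, Fin (n k)),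
      (∏ k, a k (i k)) * (w j (i j) * ∏ k ∈ univ.erase j, a k (i k))
        = ∏ k, F k (i k) := by
    intro i
    rw [← Finset.mul_prod_erase univ (fun k => F k (i k)) (mem_univ j),
        ← Finset.mul_prod_erase univ (fun k => a k (i k)) (mem_univ j)]
    have h1 : F j = fun m => w j m * a j m := Function.update_self _ _ _
    have h2 : ∀ k ∈ univ.erase j, F k (i k) = a k (i k) * a k (i k) := by
      intro k hk
      rw [hF, Function.update_of_ne (Finset.ne_of_mem_erase hk)]
    rw [Finset.prod_congr rfl h2, Finset.prod_mul_distrib, h1]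
    ring
  rw [Finset.sum_congr rfl (fun i _ => hpt i), segre_key]
  exact Finset.prod_eq_zero (mem_univ j) (by simp [hF, hw j])

lemma segre_main (a w v : ∀ k : Fin d, Fin (n k) → ℝ)
    (ha : ∀ k, ∑ j, (a k j) ^ 2 = 1) (hw : ∀ k, ∑ j, w k j * a k j = 0)
    (hv : ∀ k, ∑ j, v k j * a k j = 0) (j l : Fin d) :
    ∑ i : (∀ k, Fin (n k)),
      (w j (i j) * ∏ k ∈ univ.erase j, a k (i k))
        * (v l (i l) * ∏ k ∈ univ.erase l, a k (i k))
      = if j = l then ∑ m, w j m * v j m else 0 := by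
  rcases eq_or_ne j l with rfl | hjl
  · simp only [if_pos rfl]
    set F : ∀ k : Fin d, Fin (n k) → ℝ :=
      Function.update (fun k m => a k m * a k m) j (fun m => w j m * v j m) with hF
    have hpt : ∀ i : (∀ k, Fin (n k)),
        (w j (i j) * ∏ k ∈ univ.erase j, a k (i k))
          * (v j (i j) * ∏ k ∈ univ.erase j, a k (i k)) = ∏ k, F k (i k) := by
      intro i
      rw [← Finset.mul_prod_erase univ (fun k => F k (i k)) (mem_univ j)]
      have h2 : ∀ k ∈ univ.erase j, F k (i k) = a k (i k) * a k (i k) := by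
        intro k hk
        rw [hF, Function.update_of_ne (Finset.ne_of_mem_erase hk)]
      rw [Finset.prod_congr rfl h2, Finset.prod_mul_distrib, hF, Function.update_self]
      ring
    rw [Finset.sum_congr rfl (fun i _ => hpt i), segre_key,
        ← Finset.mul_prod_erase univ _ (mem_univ j)]
    have h1 : ∀ k ∈ univ.erase j, (∑ m, F k m) = 1 := by
      intro k hk
      rw [hF, Function.update_of_ne (Finset.ne_of_mem_erase hk)]
      simpa [sq] using ha k
    rw [Finset.prod_congr rfl h1, hF, Function.update_self]
    simp
  · rw [if_neg hjl]
    set F : ∀ k : Fin d, Fin (n k) → ℝ :=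
      Function.update (Function.update (fun k m => a k m * a k m) j
        (fun m => w j m * a j m)) l (fun m => v l m * a l m) with hF
    have hpt : ∀ i : (∀ k, Fin (n k)),
        (w j (i j) * ∏ k ∈ univ.erase j, a k (i k))
          * (v l (i l) * ∏ k ∈ univ.erase l, a k (i k)) = ∏ k, F k (i k) := by
      intro i
      have hlj : l ∈ univ.erase j := Finset.mem_erase.2 ⟨(Ne.symm hjl), mem_univ l⟩
      have hjl' : j ∈ univ.erase l := Finset.mem_erase.2 ⟨hjl, mem_univ j⟩
      rw [← Finset.mul_prod_erase univ (fun k => F k (i k)) (mem_univ j),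
          ← Finset.mul_prod_erase _ (fun k => F k (i k)) hlj,
          ← Finset.mul_prod_erase _ (fun k => a k (i k)) hlj,
          ← Finset.mul_prod_erase _ (fun k => a k (i k)) hjl',
          Finset.erase_right_comm (a := l) (b := j)]
      have h2 : ∀ k ∈ (univ.erase j).erase l, F k (i k) = a k (i k) * a k (i k) := by
        intro k hk
        have hk1 := Finset.ne_of_mem_erase hk
        have hk2 := Finset.ne_of_mem_erase (Finset.mem_of_mem_erase hk)
        rw [hF, Function.update_of_ne hk1, Function.update_of_ne hk2]
      rw [Finset.prod_congr rfl h2, Finset.prod_mul_distrib, hF,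
          Function.update_self, Function.update_of_ne hjl, Function.update_self]
      ring
    rw [Finset.sum_congr rfl (fun i _ => hpt i), segre_key]
    refine Finset.prod_eq_zero (mem_univ j) ?_
    rw [hF, Function.update_of_ne hjl, Function.update_self]
    exact hw j

end Aux


/-- The metric induced on the Segre manifold by the ambient Euclidean (Frobenius)
metric: for tangent vectors `U = λ̇·a₁⊗⋯⊗a_d + λ·Σ_k a₁⊗⋯⊗ẋ_k⊗⋯⊗a_d` and
`V = μ̇·a₁⊗⋯⊗a_d + λ·Σ_k a₁⊗⋯⊗ẏ_k⊗⋯⊗a_d` at the point `λ·a₁⊗⋯⊗a_d`,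
one has `⟨U,V⟩_F = λ̇μ̇ + λ²·Σ_k ⟨ẋ_k, ẏ_k⟩`. -/
theorem segre_induced_metric
    (d : ℕ) (hd : 1 ≤ d) (n : Fin d → ℕ) (hn : ∀ k, 1 ≤ n k)
    (lam lamdot mudot : ℝ)
    (a xdot ydot : ∀ k : Fin d, Fin (n k) → ℝ)
    (ha : ∀ k, ∑ j, (a k j) ^ 2 = 1)
    (hx : ∀ k, ∑ j, xdot k j * a k j = 0)
    (hy : ∀ k, ∑ j, ydot k j * a k j = 0)
    (U V : (∀ k : Fin d, Fin (n k)) → ℝ)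
    (hU : ∀ i, U i = lamdot * ∏ k, a k (i k)
        + lam * ∑ j, xdot j (i j) * ∏ k ∈ univ.erase j, a k (i k))
    (hV : ∀ i, V i = mudot * ∏ k, a k (i k)
        + lam * ∑ j, ydot j (i j) * ∏ k ∈ univ.erase j, a k (i k)) :
    ∑ i : (∀ k : Fin d, Fin (n k)), U i * V i
      = lamdot * mudot + lam ^ 2 * ∑ k, ∑ j, xdot k j * ydot k j := by
  have expand : ∀ i : (∀ k : Fin d, Fin (n k)), U i * V i =
      (lamdot * mudot) * ((∏ k, a k (i k)) * ∏ k, a k (i k))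
      + ∑ j, (mudot * lam) *
          ((∏ k, a k (i k)) * (xdot j (i j) * ∏ k ∈ univ.erase j, a k (i k)))
      + ∑ l, ((lamdot * lam) *
            ((∏ k, a k (i k)) * (ydot l (i l) * ∏ k ∈ univ.erase l, a k (i k)))
          + ∑ j, lam ^ 2 *
              ((xdot j (i j) * ∏ k ∈ univ.erase j, a k (i k))
                * (ydot l (i l) * ∏ k ∈ univ.erase l, a k (i k)))) := by
    intro i
    rw [hU i, hV i]
    simp only [add_mul, mul_add, Finset.mul_sum, Finset.sum_mul]
    congr 1
    · congr 1
      · ring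
      · exact Finset.sum_congr rfl fun j _ => by ring
    · refine Finset.sum_congr rfl fun l _ => ?_
      congr 1
      · ring
      · exact Finset.sum_congr rfl fun j _ => by ring
  have h1 : ∑ i : (∀ k : Fin d, Fin (n k)),
      (lamdot * mudot) * ((∏ k, a k (i k)) * ∏ k, a k (i k)) = lamdot * mudot := by
    rw [← Finset.mul_sum, segre_P2 a ha, mul_one]
  have h2 : ∑ i : (∀ k : Fin d, Fin (n k)), ∑ j, (mudot * lam) *
      ((∏ k, a k (i k)) * (xdot j (i j) * ∏ k ∈ univ.erase j, a k (i k))) = 0 := by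
    rw [Finset.sum_comm]
    refine Finset.sum_eq_zero fun j _ => ?_
    rw [← Finset.mul_sum, segre_cross a xdot ha hx j, mul_zero]
  have h3 : ∀ l : Fin d, ∑ i : (∀ k : Fin d, Fin (n k)), (lamdot * lam) *
      ((∏ k, a k (i k)) * (ydot l (i l) * ∏ k ∈ univ.erase l, a k (i k))) = 0 := by
    intro l
    rw [← Finset.mul_sum, segre_cross a ydot ha hy l, mul_zero]
  have h4 : ∀ l : Fin d, ∑ i : (∀ k : Fin d, Fin (n k)), ∑ j, lam ^ 2 *
      ((xdot j (i j) * ∏ k ∈ univ.erase j, a k (i k))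
        * (ydot l (i l) * ∏ k ∈ univ.erase l, a k (i k)))
      = lam ^ 2 * ∑ m, xdot l m * ydot l m := by
    intro l
    rw [Finset.sum_comm]
    have step : ∀ j : Fin d, ∑ i : (∀ k : Fin d, Fin (n k)), lam ^ 2 *
        ((xdot j (i j) * ∏ k ∈ univ.erase j, a k (i k))
          * (ydot l (i l) * ∏ k ∈ univ.erase l, a k (i k)))
        = lam ^ 2 * (if j = l then ∑ m, xdot j m * ydot j m else 0) := by
      intro j
      rw [← Finset.mul_sum, segre_main a xdot ydot ha hx hy j l]
    rw [Finset.sum_congr rfl fun j _ => step j]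
    simp [mul_ite, Finset.sum_ite_eq']
  calc ∑ i : (∀ k : Fin d, Fin (n k)), U i * V i
      = ∑ i : (∀ k : Fin d, Fin (n k)), ((lamdot * mudot) * ((∏ k, a k (i k)) * ∏ k, a k (i k))
      + ∑ j, (mudot * lam) *
          ((∏ k, a k (i k)) * (xdot j (i j) * ∏ k ∈ univ.erase j, a k (i k)))
      + ∑ l, ((lamdot * lam) *
            ((∏ k, a k (i k)) * (ydot l (i l) * ∏ k ∈ univ.erase l, a k (i k)))
          + ∑ j, lam ^ 2 *
              ((xdot j (i j) * ∏ k ∈ univ.erase j, a k (i k))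
                * (ydot l (i l) * ∏ k ∈ univ.erase l, a k (i k))))) :=
        Finset.sum_congr rfl fun i _ => expand i
    _ = lamdot * mudot + lam ^ 2 * ∑ k, ∑ j, xdot k j * ydot k j := by
        simp only [Finset.sum_add_distrib]
        rw [h1, h2, Finset.sum_comm]
        rw [Finset.sum_congr rfl fun l (_ : l ∈ univ) => h3 l,
            Finset.sum_comm]
        rw [Finset.sum_congr rfl fun l (_ : l ∈ univ) => h4 l, ← Finset.mul_sum]
        simp
end

section
/- Let A ≠ 0 and B ∈ ℝ, and β(s) = A / cos(s + B). Then for every s with cos(s + B) ≠ 0, d/ds ( β′(s)/√(β′(s)² + β(s)²) ) = β(s)/√(β′(s)² + β(s)²); that is, β is a solution of the Euler–Lagrange equation for the Lagrangian L = √(β′² + β²). -/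
lemma cosB_deriv (B s : ℝ) :
    HasDerivAt (fun s => Real.cos (s + B)) (-Real.sin (s + B)) s := by
  simpa [Function.comp_def] using (Real.hasDerivAt_cos (s + B)).comp s ((hasDerivAt_id s).add_const B)

lemma betaA_deriv (A B : ℝ) {s : ℝ} (h : Real.cos (s + B) ≠ 0) :
    HasDerivAt (fun s => A / Real.cos (s + B))
      (A * Real.sin (s + B) / Real.cos (s + B) ^ 2) s := by
  have := (hasDerivAt_const s A).div (cosB_deriv B s) h
  exact this.congr_deriv (by ring)

lemma betaA_quot (A B : ℝ) (hA : A ≠ 0) {x : ℝ} (hx : Real.cos (x + B) ≠ 0) :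
    deriv (fun s => A / Real.cos (s + B)) x /
      Real.sqrt ((deriv (fun s => A / Real.cos (s + B)) x) ^ 2 +
        (A / Real.cos (x + B)) ^ 2) = (A / |A|) * Real.sin (x + B) := by
  have hd : deriv (fun s => A / Real.cos (s + B)) x
      = A * Real.sin (x + B) / Real.cos (x + B) ^ 2 := (betaA_deriv A B hx).deriv
  rw [hd]
  have hpy := Real.sin_sq_add_cos_sq (x + B)
  have key : (A * Real.sin (x + B) / Real.cos (x + B) ^ 2) ^ 2 +
      (A / Real.cos (x + B)) ^ 2 = (|A| / Real.cos (x + B) ^ 2) ^ 2 := by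
    rw [div_pow, div_pow, div_pow, sq_abs]
    field_simp
    linear_combination hpy
  rw [key, Real.sqrt_sq (by positivity)]
  have hA' : |A| ≠ 0 := abs_ne_zero.mpr hA
  field_simp

/-- The function `β(s) = A / cos(s + B)` (with `A ≠ 0`) solves the
Euler–Lagrange equation for the Lagrangian `L = √(β′² + β²)`:
`d/ds ( β′/√(β′² + β²) ) = β/√(β′² + β²)` wherever `cos(s + B) ≠ 0`. -/
theorem beta_solves_euler_lagrange (A B : ℝ) (hA : A ≠ 0) :
    ∀ s : ℝ, Real.cos (s + B) ≠ 0 →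
      deriv (fun s =>
          deriv (fun s => A / Real.cos (s + B)) s /
            Real.sqrt ((deriv (fun s => A / Real.cos (s + B)) s) ^ 2 +
              ((fun s => A / Real.cos (s + B)) s) ^ 2)) s
        = (fun s => A / Real.cos (s + B)) s /
            Real.sqrt ((deriv (fun s => A / Real.cos (s + B)) s) ^ 2 +
              ((fun s => A / Real.cos (s + B)) s) ^ 2) := by
  intro s hs
  have hcont : Continuous fun x : ℝ => Real.cos (x + B) := by continuity
  have hU : IsOpen {x : ℝ | Real.cos (x + B) ≠ 0} := isOpen_ne.preimage hcont
  have hmem : {x : ℝ | Real.cos (x + B) ≠ 0} ∈ nhds s := hU.mem_nhds hs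
  have heq : (fun s =>
      deriv (fun s => A / Real.cos (s + B)) s /
        Real.sqrt ((deriv (fun s => A / Real.cos (s + B)) s) ^ 2 +
          ((fun s => A / Real.cos (s + B)) s) ^ 2))
      =ᶠ[nhds s] (fun x => (A / |A|) * Real.sin (x + B)) := by
    filter_upwards [hmem] with x hx
    simpa using betaA_quot A B hA hx
  rw [heq.deriv_eq]
  have hsin : HasDerivAt (fun x => (A / |A|) * Real.sin (x + B))
      ((A / |A|) * Real.cos (s + B)) s := by
    have := (Real.hasDerivAt_sin (s + B)).comp s ((hasDerivAt_id s).add_const B)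
    simpa using this.const_mul (A / |A|)
  rw [hsin.deriv]
  -- RHS computation
  have hd : deriv (fun s => A / Real.cos (s + B)) s
      = A * Real.sin (s + B) / Real.cos (s + B) ^ 2 := (betaA_deriv A B hs).deriv
  simp only [hd]
  have hpy := Real.sin_sq_add_cos_sq (s + B)
  have key : (A * Real.sin (s + B) / Real.cos (s + B) ^ 2) ^ 2 +
      (A / Real.cos (s + B)) ^ 2 = (|A| / Real.cos (s + B) ^ 2) ^ 2 := by
    rw [div_pow, div_pow, div_pow, sq_abs]
    field_simp
    linear_combination hpy
  rw [key, Real.sqrt_sq (by positivity)]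
  have hA' : |A| ≠ 0 := abs_ne_zero.mpr hA
  field_simp
end

section
/- Let λ₀ > 0 and P ∈ ℝ, and define λ(t) = √( t² + (2λ₀P/√(P²+1))·t + λ₀² ) and f(t) = arctan( (√(P²+1)/λ₀)·t + P ) − arctan(P). Then for every t ∈ ℝ, λ′(t)² + λ(t)²·f′(t)² = 1. -/
/-!
In the cone metric `dλ² + λ² dθ²` geodesics are straight lines, and `λ(t) e^{i f(t)}` is the
unit-speed line `λ₀ + t e^{iα}` with `e^{iα} = (P + i)/√(P² + 1)`. Concretely, `λ² = q = t² + bt + λ₀²`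
has discriminant `-ω²` with `ω = 2λ₀/√(P² + 1)`, and `f = arctan ((2t + b)/ω) - arctan P`.
Since `4q = (2t + b)² + ω²`, we get `λ′ = (2t + b)/(2λ)` and `f′ = ω/(2q)`, so
`4q (λ′² + λ² f′²) = (2t + b)² + ω² = 4q`.
-/

open Real

section MonicQuadratic

variable {b c ω : ℝ}

theorem four_mul_quadratic_eq (hω : ω ^ 2 = 4 * c - b ^ 2) (t : ℝ) :
    4 * (t ^ 2 + b * t + c) = (2 * t + b) ^ 2 + ω ^ 2 := by
  linear_combination -hω

theorem quadratic_pos (hω : ω ^ 2 = 4 * c - b ^ 2) (hω₀ : ω ≠ 0) (t : ℝ) :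
    0 < t ^ 2 + b * t + c := by
  have h4 := four_mul_quadratic_eq hω t
  have hω₂ : 0 < ω ^ 2 := by positivity
  nlinarith [sq_nonneg (2 * t + b)]

theorem hasDerivAt_quadratic (t : ℝ) :
    HasDerivAt (fun t => t ^ 2 + b * t + c) (2 * t + b) t := by
  simpa using (((hasDerivAt_pow 2 t).add ((hasDerivAt_id t).const_mul b)).add_const c)

theorem hasDerivAt_arctan_quadratic (hω : ω ^ 2 = 4 * c - b ^ 2) (hω₀ : ω ≠ 0) (t : ℝ) :
    HasDerivAt (fun t => arctan ((2 * t + b) / ω)) (ω / (2 * (t ^ 2 + b * t + c))) t := by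
  have hlin : HasDerivAt (fun t => (2 * t + b) / ω) (2 / ω) t := by
    simpa using (((hasDerivAt_id t).const_mul 2).add_const b).div_const ω
  convert hlin.arctan using 1
  have h4 := four_mul_quadratic_eq hω t
  have hq := (quadratic_pos hω hω₀ t).ne'
  generalize t ^ 2 + b * t + c = q at h4 hq ⊢
  field_simp
  linear_combination -h4

theorem sqrt_quadratic_arctan_unit_speed (hω : ω ^ 2 = 4 * c - b ^ 2) (hω₀ : ω ≠ 0) (t : ℝ) :
    (deriv (fun t => √(t ^ 2 + b * t + c)) t) ^ 2
      + (√(t ^ 2 + b * t + c)) ^ 2 * (deriv (fun t => arctan ((2 * t + b) / ω)) t) ^ 2 = 1 := by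
  have hq := quadratic_pos hω hω₀ t
  rw [((hasDerivAt_quadratic t).sqrt hq.ne').deriv, (hasDerivAt_arctan_quadratic hω hω₀ t).deriv,
    div_pow, mul_pow, sq_sqrt hq.le]
  have h4 := four_mul_quadratic_eq hω t
  generalize t ^ 2 + b * t + c = q at h4 hq ⊢
  field_simp
  linear_combination -h4

end MonicQuadratic

/-- Unit-speed identity for the Segre geodesic in the warped-product metric:
with `λ(t) = √(t² + (2λ₀P/√(P²+1))·t + λ₀²)` and
`f(t) = arctan(√(P²+1)/λ₀ · t + P) − arctan P`, one has
`λ′(t)² + λ(t)²·f′(t)² = 1` for all `t`. -/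
theorem segre_geodesic_unit_speed (lam0 P : ℝ) (hlam0 : 0 < lam0) :
    ∀ t : ℝ,
      (deriv (fun t : ℝ =>
          Real.sqrt (t ^ 2 + 2 * lam0 * P / Real.sqrt (P ^ 2 + 1) * t + lam0 ^ 2)) t) ^ 2
      + (Real.sqrt (t ^ 2 + 2 * lam0 * P / Real.sqrt (P ^ 2 + 1) * t + lam0 ^ 2)) ^ 2 *
          (deriv (fun t : ℝ =>
            Real.arctan (Real.sqrt (P ^ 2 + 1) / lam0 * t + P) - Real.arctan P) t) ^ 2
      = 1 := by
  intro t
  set s := √(P ^ 2 + 1)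
  have hs : 0 < s := sqrt_pos.2 (by positivity)
  have hs2 : s ^ 2 = P ^ 2 + 1 := sq_sqrt (by positivity)
  have hω : (2 * lam0 / s) ^ 2 = 4 * lam0 ^ 2 - (2 * lam0 * P / s) ^ 2 := by
    field_simp
    linear_combination -4 * hs2
  have hangle : (fun t => arctan (s / lam0 * t + P))
      = fun t => arctan ((2 * t + 2 * lam0 * P / s) / (2 * lam0 / s)) := by
    funext t
    congr 1
    field_simp
  rw [deriv_sub_const, hangle]
  exact sqrt_quadratic_arctan_unit_speed hω (by positivity) t
end
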